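/- arXiv:0911.3845 — 3 statements merged into one kernel-verified Lean document; each statement's English description precedes it below -/
import Mathlib

section
/- Let i : g → h be a Cartan homotopy between dglas g and h, and let l : g → h be the associated degree-0 linear map defined on homogeneous elements by l_a = d_h(i_a) + i_{d_g a}. Then l is a morphism of dglas: it preserves degrees, commutes with the differentials (l_{d_g a} = d_h(l_a) for all homogeneous a), and preserves brackets (l_{[a,b]_g} = [l_a, l_b]_h for all homogeneous a, b in g). -/
/-!
STATEMENT 0: If `i : g → h` is a Cartan homotopy between dglas, then the associated
degree-0 map `l : a ↦ d_h (i a) + i (d_g a)` is a morphism of dglas.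
-/

universe u

/-- A differential graded Lie algebra (dgla) over a field `K`: a `ℤ`-graded `K`-vector
space with a bilinear bracket of degree `0`, graded antisymmetric and satisfying the graded
Jacobi identity on homogeneous elements, together with a degree `1` differential squaring
to zero and satisfying the graded Leibniz rule. -/
structure DGLA (K : Type u) [Field K] where
  carrier : Type u
  [acg : AddCommGroup carrier]
  [mod : Module K carrier]
  grade : ℤ → Submodule K carrier
  isInternal : DirectSum.IsInternal grade
  bracket : carrier →ₗ[K] carrier →ₗ[K] carrier
  bracket_mem : ∀ (i j : ℤ) (x y : carrier),
    x ∈ grade i → y ∈ grade j → bracket x y ∈ grade (i + j)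
  antisymm : ∀ (i j : ℤ) (x y : carrier), x ∈ grade i → y ∈ grade j →
    bracket x y = -((-1 : K) ^ (i * j)) • bracket y x
  jacobi : ∀ (i j k : ℤ) (x y z : carrier), x ∈ grade i → y ∈ grade j → z ∈ grade k →
    bracket x (bracket y z)
      = bracket (bracket x y) z + ((-1 : K) ^ (i * j)) • bracket y (bracket x z)
  d : carrier →ₗ[K] carrier
  d_mem : ∀ (i : ℤ) (x : carrier), x ∈ grade i → d x ∈ grade (i + 1)
  d_sq : ∀ x : carrier, d (d x) = 0
  leibniz : ∀ (i j : ℤ) (x y : carrier), x ∈ grade i → y ∈ grade j →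
    d (bracket x y) = bracket (d x) y + ((-1 : K) ^ i) • bracket x (d y)

attribute [instance] DGLA.acg DGLA.mod

variable {K : Type u} [Field K]

/-- The degree `0` map `l : a ↦ d_h (i a) + i (d_g a)` associated with a degree `-1`
linear map `i : g → h`. -/
def assocL (g h : DGLA K) (i : g.carrier →ₗ[K] h.carrier) : g.carrier → h.carrier :=
  fun a => h.d (i a) + i (g.d a)

/-- `i : g → h` is a Cartan homotopy: it is a degree `-1` linear map such that, with
`l_a := d_h (i_a) + i_{d_g a}`, for all homogeneous `a, b, c` one has
`i_{[a,b]} = ½([i_a, l_b] − (−1)^{|a||b|}[i_b, l_a])` and `[i_a, [i_b, l_c]] = 0`. -/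
def IsCartanHomotopy (g h : DGLA K) (i : g.carrier →ₗ[K] h.carrier) : Prop :=
  (∀ (k : ℤ) (x : g.carrier), x ∈ g.grade k → i x ∈ h.grade (k - 1)) ∧
  (∀ (p q : ℤ) (a b : g.carrier), a ∈ g.grade p → b ∈ g.grade q →
    i (g.bracket a b)
      = (2 : K)⁻¹ • (h.bracket (i a) (assocL g h i b)
          - ((-1 : K) ^ (p * q)) • h.bracket (i b) (assocL g h i a))) ∧
  (∀ (p q r : ℤ) (a b c : g.carrier), a ∈ g.grade p → b ∈ g.grade q → c ∈ g.grade r →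
    h.bracket (i a) (h.bracket (i b) (assocL g h i c)) = 0)

lemma neg_one_zpow_mul_self (n : ℤ) : (-1 : K) ^ n * (-1 : K) ^ n = 1 := by
  rw [← zpow_add₀ (by norm_num : (-1 : K) ≠ 0), ← two_mul, zpow_mul]
  norm_num

lemma neg_one_zpow_sub_one (n : ℤ) : (-1 : K) ^ (n - 1) = -(-1 : K) ^ n := by
  rw [zpow_sub₀ (by norm_num : (-1 : K) ≠ 0)]
  norm_num
  rw [div_neg, div_one]

lemma neg_one_zpow_add (m n : ℤ) : (-1 : K) ^ (m + n) = (-1 : K) ^ m * (-1 : K) ^ n :=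
  zpow_add₀ (by norm_num) m n

/-- if `i` is a Cartan homotopy then `l = d_h ∘ i + i ∘ d_g` is a morphism of
dglas: it preserves degrees, commutes with the differentials, and preserves brackets. -/
theorem assocL_is_dgla_morphism [CharZero K] (g h : DGLA K)
    (i : g.carrier →ₗ[K] h.carrier) (hi : IsCartanHomotopy g h i) :
    (∀ (k : ℤ) (a : g.carrier), a ∈ g.grade k → assocL g h i a ∈ h.grade k) ∧
    (∀ (k : ℤ) (a : g.carrier), a ∈ g.grade k →
      assocL g h i (g.d a) = h.d (assocL g h i a)) ∧
    (∀ (p q : ℤ) (a b : g.carrier), a ∈ g.grade p → b ∈ g.grade q →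
      assocL g h i (g.bracket a b) = h.bracket (assocL g h i a) (assocL g h i b)) := by
  obtain ⟨hdeg, hbr, -⟩ := hi
  have part1 : ∀ (k : ℤ) (a : g.carrier), a ∈ g.grade k → assocL g h i a ∈ h.grade k := by
    intro k a ha
    have h1 : h.d (i a) ∈ h.grade k := by
      have := h.d_mem (k - 1) _ (hdeg k a ha)
      simpa using this
    have h2 : i (g.d a) ∈ h.grade k := by
      have := hdeg (k + 1) _ (g.d_mem k a ha)
      simpa using this
    exact (h.grade k).add_mem h1 h2
  have part2 : ∀ (a : g.carrier), assocL g h i (g.d a) = h.d (assocL g h i a) := by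
    intro a
    simp [assocL, g.d_sq, h.d_sq]
  refine ⟨part1, fun k a _ => part2 a, ?_⟩
  intro p q a b ha hb
  set l := assocL g h i with hl
  have hda : g.d a ∈ g.grade (p + 1) := g.d_mem p a ha
  have hdb : g.d b ∈ g.grade (q + 1) := g.d_mem q b hb
  have hia : i a ∈ h.grade (p - 1) := hdeg p a ha
  have hib : i b ∈ h.grade (q - 1) := hdeg q b hb
  have hla : l a ∈ h.grade p := part1 p a ha
  have hlb : l b ∈ h.grade q := part1 q b hb
  -- d (i a) = l a - i (d a)
  have dia : h.d (i a) = l a - i (g.d a) := by simp [hl, assocL]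
  have dib : h.d (i b) = l b - i (g.d b) := by simp [hl, assocL]
  have dla : h.d (l a) = l (g.d a) := (part2 a).symm
  have dlb : h.d (l b) = l (g.d b) := (part2 b).symm
  -- expand l [a,b]
  have key : l (g.bracket a b)
      = h.d (i (g.bracket a b)) + i (g.bracket (g.d a) b)
        + ((-1 : K) ^ p) • i (g.bracket a (g.d b)) := by
    simp only [hl, assocL]
    rw [g.leibniz p q a b ha hb, map_add, map_smul]
    abel
  rw [key, hbr p q a b ha hb, hbr (p + 1) q (g.d a) b hda hb,
    hbr p (q + 1) a (g.d b) ha hdb]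
  rw [map_smul, map_sub, map_smul]
  rw [h.leibniz (p - 1) q (i a) (l b) hia hlb,
    h.leibniz (q - 1) p (i b) (l a) hib hla]
  rw [dia, dib, dla, dlb]
  simp only [map_sub, LinearMap.sub_apply]
  have antis : h.bracket (l b) (l a) = -((-1 : K) ^ (q * p)) • h.bracket (l a) (l b) :=
    h.antisymm q p (l b) (l a) hlb hla
  rw [antis]
  have e1 : (p + 1) * q = p * q + q := by ring
  have e2 : p * (q + 1) = p * q + p := by ring
  have e3 : q * p = p * q := by ring
  rw [e1, e2, e3, neg_one_zpow_add, neg_one_zpow_add,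
    neg_one_zpow_sub_one, neg_one_zpow_sub_one]
  simp only [map_sub, map_smul, map_add, LinearMap.sub_apply, LinearMap.smul_apply,
    LinearMap.add_apply, smul_sub, smul_add, smul_smul, neg_smul, smul_neg]
  have hZ : (-1 : K) ^ (p * q) * (-1 : K) ^ (p * q) = 1 := neg_one_zpow_mul_self _
  have hX : (-1 : K) ^ p * (-1 : K) ^ p = 1 := neg_one_zpow_mul_self _
  have hY : (-1 : K) ^ q * (-1 : K) ^ q = 1 := neg_one_zpow_mul_self _
  generalize hZ' : (-1 : K) ^ (p * q) = Z at *
  generalize hX' : (-1 : K) ^ p = X at *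
  generalize hY' : (-1 : K) ^ q = Y at *
  match_scalars
  all_goals
    first
      | ring1
      | linear_combination hZ / 2
      | linear_combination (Z / 2) * hX
      | linear_combination (-Z / 2) * hX
end

section
/- Let g be a dgla over a field K of characteristic zero, let x ∈ g^1 satisfy the Maurer–Cartan equation dx + ½[x,x] = 0, and let α ∈ g^0 be such that the adjoint operator ad_α = [α,−] is nilpotent on g. Define the gauge transform e^α * x := x + Σ_{n≥0} (ad_α)^n/((n+1)!) ([α,x] − dα) (a finite sum by nilpotency of ad_α). Then e^α * x again satisfies the Maurer–Cartan equation: d(e^α * x) + ½[e^α * x, e^α * x] = 0. -/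
/-!
STATEMENT 0: If `i : g → h` is a Cartan homotopy between dglas, then the associated
degree-0 map `l : a ↦ d_h (i a) + i (d_g a)` is a morphism of dglas.
-/

universe u

variable {K : Type u} [Field K]

namespace GaugeMCAux

variable {K : Type u} [Field K]

/-- Auxiliary sequence of pairs: `gseq 0 = (x,1)` and
`gseq (n+1) = ([α, (gseq n).1] - (gseq n).2 • dα, 0)`. -/
def gseq (g : DGLA K) (α x : g.carrier) : ℕ → g.carrier × K
  | 0 => (x, 1)
  | n + 1 => (g.bracket α (gseq g α x n).1 - (gseq g α x n).2 • g.d α, 0)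

/-- The bilinear form `B((u,s),(v,t)) = [u,v] + s • dv + t • du`. -/
def BF (g : DGLA K) : (g.carrier × K) →ₗ[K] (g.carrier × K) →ₗ[K] g.carrier :=
  LinearMap.mk₂ K (fun z w => g.bracket z.1 w.1 + z.2 • g.d w.1 + w.2 • g.d z.1)
    (fun z z' w => by
      simp only [Prod.fst_add, Prod.snd_add, map_add, LinearMap.add_apply, add_smul, smul_add]
      abel)
    (fun c z w => by
      simp only [Prod.smul_fst, Prod.smul_snd, map_smul, LinearMap.smul_apply, smul_eq_mul,
        mul_smul, smul_add]
      rw [smul_comm w.2 c])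
    (fun z w w' => by
      simp only [Prod.fst_add, Prod.snd_add, map_add, LinearMap.add_apply, add_smul, smul_add]
      abel)
    (fun c z w => by
      simp only [Prod.smul_fst, Prod.smul_snd, map_smul, LinearMap.smul_apply, smul_eq_mul,
        mul_smul, smul_add]
      rw [smul_comm z.2 c])

lemma BF_apply (g : DGLA K) (z w : g.carrier × K) :
    BF g z w = g.bracket z.1 w.1 + z.2 • g.d w.1 + w.2 • g.d z.1 := rfl

lemma gseq_fst_mem (g : DGLA K) {α x : g.carrier} (hα : α ∈ g.grade 0)
    (hx : x ∈ g.grade 1) : ∀ n, (gseq g α x n).1 ∈ g.grade 1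
  | 0 => hx
  | n + 1 => by
    have h1 : g.bracket α (gseq g α x n).1 ∈ g.grade 1 := by
      have := g.bracket_mem 0 1 α (gseq g α x n).1 hα (gseq_fst_mem g hα hx n)
      simpa using this
    have h2 : g.d α ∈ g.grade 1 := by simpa using g.d_mem 0 α hα
    exact sub_mem h1 (Submodule.smul_mem _ _ h2)

lemma gseq_snd (g : DGLA K) (α x : g.carrier) (n : ℕ) :
    (gseq g α x (n + 1)).2 = 0 := rfl

lemma gseq_fst_pow (g : DGLA K) (α x : g.carrier) :
    ∀ n, (gseq g α x (n + 1)).1 = ((g.bracket α) ^ n) ((gseq g α x 1).1)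
  | 0 => by simp
  | n + 1 => by
    show g.bracket α (gseq g α x (n + 1)).1 - (gseq g α x (n + 1)).2 • g.d α = _
    rw [gseq_snd, zero_smul, sub_zero, gseq_fst_pow g α x n, pow_succ',
      Module.End.mul_apply]

lemma gseq_eventually_zero (g : DGLA K) (α x : g.carrier) (N : ℕ)
    (hN : ∀ z : g.carrier, ((g.bracket α) ^ N) z = 0) :
    ∀ m, N + 1 ≤ m → gseq g α x m = 0 := by
  intro m hm
  obtain ⟨n, rfl⟩ : ∃ n, m = n + 1 := ⟨m - 1, by omega⟩
  have h1 : (gseq g α x (n + 1)).1 = 0 := by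
    rw [gseq_fst_pow]
    obtain ⟨k, rfl⟩ : ∃ k, n = k + N := ⟨n - N, by omega⟩
    rw [pow_add, Module.End.mul_apply, hN, map_zero]
  have : gseq g α x (n + 1) = ((gseq g α x (n + 1)).1, (gseq g α x (n + 1)).2) := rfl
  rw [this, h1, gseq_snd]
  rfl

/-- The key derivation identity: `ad_α` is a derivation of `BF` in the relevant degrees. -/
lemma bracket_BF (g : DGLA K) {α : g.carrier} (hα : α ∈ g.grade 0)
    (z w : g.carrier × K) (hz : z.1 ∈ g.grade 1) (hw : w.1 ∈ g.grade 1) :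
    g.bracket α (BF g z w)
      = BF g (g.bracket α z.1 - z.2 • g.d α, 0) w
        + BF g z (g.bracket α w.1 - w.2 • g.d α, 0) := by
  have hdα : g.d α ∈ g.grade 1 := by simpa using g.d_mem 0 α hα
  have jac : g.bracket α (g.bracket z.1 w.1)
      = g.bracket (g.bracket α z.1) w.1 + g.bracket z.1 (g.bracket α w.1) := by
    have := g.jacobi 0 1 1 α z.1 w.1 hα hz hw
    simpa using this
  have lz : g.d (g.bracket α z.1) = g.bracket (g.d α) z.1 + g.bracket α (g.d z.1) := by
    have := g.leibniz 0 1 α z.1 hα hz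
    simpa using this
  have lw : g.d (g.bracket α w.1) = g.bracket (g.d α) w.1 + g.bracket α (g.d w.1) := by
    have := g.leibniz 0 1 α w.1 hα hw
    simpa using this
  have az : g.bracket z.1 (g.d α) = g.bracket (g.d α) z.1 := by
    have := g.antisymm 1 1 z.1 (g.d α) hz hdα
    simpa using this
  simp only [BF_apply, map_add, map_sub, map_smul, LinearMap.add_apply, LinearMap.sub_apply,
    LinearMap.smul_apply, smul_zero, zero_smul, add_zero, zero_add, smul_sub, g.d_sq,
    sub_zero, map_zero]
  rw [jac, lz, lw, az]
  module

end GaugeMCAux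

namespace GaugeMCAux

/-- Pascal-type rearrangement of binomial sums. -/
lemma binom_step {V : Type u} [AddCommGroup V] [Module K V] (F : ℕ → ℕ → V) (p : ℕ) :
    ∑ k ∈ Finset.range (p + 2), (((p + 1).choose k : ℕ) : K) • F k (p + 1 - k)
      = (∑ k ∈ Finset.range (p + 1), ((p.choose k : ℕ) : K) • F (k + 1) (p - k))
        + ∑ k ∈ Finset.range (p + 1), ((p.choose k : ℕ) : K) • F k (p + 1 - k) := by
  rw [Finset.sum_range_succ' (fun k => (((p + 1).choose k : ℕ) : K) • F k (p + 1 - k)) (p + 1)]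
  have h1 : ∀ k ∈ Finset.range (p + 1),
      (((p + 1).choose (k + 1) : ℕ) : K) • F (k + 1) (p + 1 - (k + 1))
        = ((p.choose k : ℕ) : K) • F (k + 1) (p - k)
          + ((p.choose (k + 1) : ℕ) : K) • F (k + 1) (p - k) := by
    intro k _
    have hidx : p + 1 - (k + 1) = p - k := by omega
    rw [hidx, Nat.choose_succ_succ, Nat.cast_add, add_smul]
  rw [Finset.sum_congr rfl h1, Finset.sum_add_distrib]
  have e1 := Finset.sum_range_succ (fun k => ((p.choose k : ℕ) : K) • F k (p + 1 - k)) (p + 1)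
  have e2 := Finset.sum_range_succ' (fun k => ((p.choose k : ℕ) : K) • F k (p + 1 - k)) (p + 1)
  have key := e2.symm.trans e1
  -- key : ∑ f(k+1) + f 0 = ∑ f + f (p+1)
  have h3 : ∀ k ∈ Finset.range (p + 1),
      ((p.choose (k + 1) : ℕ) : K) • F (k + 1) (p + 1 - (k + 1))
        = ((p.choose (k + 1) : ℕ) : K) • F (k + 1) (p - k) := by
    intro k _
    have hidx : p + 1 - (k + 1) = p - k := by omega
    rw [hidx]
  rw [Finset.sum_congr rfl h3] at key
  have hz : ((p.choose (p + 1) : ℕ) : K) • F (p + 1) (p + 1 - (p + 1)) = 0 := by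
    simp [Nat.choose_succ_self]
  rw [hz, add_zero] at key
  simp only [Nat.choose_zero_right, Nat.cast_one, one_smul, Nat.sub_zero] at key ⊢
  -- key : ∑ (p.choose (k+1)) • F (k+1) (p-k) + F 0 (p+1) = ∑ (p.choose k) • F k (p+1-k)
  rw [← key]
  abel

lemma sum_ext {V : Type u} [AddCommGroup V] (h : ℕ → V) (M M' : ℕ) (hM : M ≤ M')
    (hzero : ∀ n, M ≤ n → h n = 0) :
    ∑ n ∈ Finset.range M', h n = ∑ n ∈ Finset.range M, h n := by
  refine (Finset.sum_subset (Finset.range_subset_range.2 hM) ?_).symm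
  intro n _ hn
  exact hzero n (by simpa using hn)

/-- Square sums equal triangle sums when terms with a large index vanish. -/
lemma tri {V : Type u} [AddCommGroup V] (M : ℕ) (f : ℕ → ℕ → V)
    (hf : ∀ m n, M ≤ m ∨ M ≤ n → f m n = 0) :
    ∑ m ∈ Finset.range M, ∑ n ∈ Finset.range M, f m n
      = ∑ p ∈ Finset.range (2 * M), ∑ k ∈ Finset.range (p + 1), f k (p - k) := by
  rw [Finset.sum_range_diag_flip]
  symm
  calc ∑ m ∈ Finset.range (2 * M), ∑ k ∈ Finset.range (2 * M - m), f m k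
      = ∑ m ∈ Finset.range (2 * M), ∑ k ∈ Finset.range M, f m k := by
        refine Finset.sum_congr rfl fun m _ => ?_
        by_cases h : m < M
        · exact sum_ext (fun k => f m k) M (2 * M - m) (by omega)
            (fun n hn => hf m n (Or.inr hn))
        · rw [Finset.sum_eq_zero fun n _ => hf m n (Or.inl (by omega)),
            Finset.sum_eq_zero fun n _ => hf m n (Or.inl (by omega))]
    _ = ∑ m ∈ Finset.range M, ∑ k ∈ Finset.range M, f m k :=
        sum_ext _ M (2 * M) (by omega)
          (fun m hm => Finset.sum_eq_zero fun n _ => hf m n (Or.inl hm))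

/-- Iterated derivation identity (Leibniz binomial formula). -/
lemma iter_pow (g : DGLA K) {α x : g.carrier} (hα : α ∈ g.grade 0) (hx : x ∈ g.grade 1)
    (p : ℕ) :
    ((g.bracket α) ^ p) (BF g (gseq g α x 0) (gseq g α x 0))
      = ∑ k ∈ Finset.range (p + 1), ((p.choose k : ℕ) : K) •
          BF g (gseq g α x k) (gseq g α x (p - k)) := by
  have step : ∀ k m : ℕ,
      g.bracket α (BF g (gseq g α x k) (gseq g α x m))
        = BF g (gseq g α x (k + 1)) (gseq g α x m)
          + BF g (gseq g α x k) (gseq g α x (m + 1)) :=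
    fun k m => bracket_BF g hα _ _ (gseq_fst_mem g hα hx k) (gseq_fst_mem g hα hx m)
  induction p with
  | zero => simp
  | succ p ih =>
    rw [pow_succ', Module.End.mul_apply, ih, map_sum]
    have expand : ∀ k ∈ Finset.range (p + 1),
        g.bracket α (((p.choose k : ℕ) : K) • BF g (gseq g α x k) (gseq g α x (p - k)))
          = ((p.choose k : ℕ) : K) • BF g (gseq g α x (k + 1)) (gseq g α x (p - k))
            + ((p.choose k : ℕ) : K) • BF g (gseq g α x k) (gseq g α x (p + 1 - k)) := by
      intro k hk
      have hk' : k ≤ p := by simpa [Nat.lt_succ_iff] using hk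
      have hidx : p + 1 - k = (p - k) + 1 := by omega
      rw [map_smul, step, smul_add, hidx]
    rw [Finset.sum_congr rfl expand, Finset.sum_add_distrib]
    exact (binom_step (fun k m => BF g (gseq g α x k) (gseq g α x m)) p).symm

end GaugeMCAux
/-- the gauge transform `e^α * x` of a Maurer–Cartan element `x ∈ g^1` by
`α ∈ g^0` with `ad_α` nilpotent (so that the defining series
`e^α * x = x + Σ_{n≥0} (ad_α)^n/((n+1)!) ([α,x] − dα)` is the displayed finite sum) again
satisfies the Maurer–Cartan equation. -/
theorem gauge_preserves_maurerCartan [CharZero K] (g : DGLA K)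
    (x : g.carrier) (hx : x ∈ g.grade 1)
    (hMC : g.d x + (2 : K)⁻¹ • g.bracket x x = 0)
    (α : g.carrier) (hα : α ∈ g.grade 0)
    (N : ℕ) (hN : ∀ z : g.carrier, ((g.bracket α) ^ N) z = 0)
    (y : g.carrier)
    (hy : y = x + ∑ n ∈ Finset.range N, ((Nat.factorial (n + 1) : K))⁻¹ •
        ((g.bracket α) ^ n) (g.bracket α x - g.d α)) :
    g.d y + (2 : K)⁻¹ • g.bracket y y = 0 := by

  classical
  open GaugeMCAux in
  have h2K : (2 : K) ≠ 0 := by norm_num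
  -- identification of the pair (y, 1) with the exponential sum of gseq
  have hy1 : ((y, (1 : K)) : g.carrier × K)
      = ∑ n ∈ Finset.range (N + 1), ((Nat.factorial n : K))⁻¹ • gseq g α x n := by
    have hfst : (∑ n ∈ Finset.range (N + 1), ((Nat.factorial n : K))⁻¹ • gseq g α x n).1
        = y := by
      rw [Prod.fst_sum]
      simp only [Prod.smul_fst]
      rw [Finset.sum_range_succ'
        (fun n => ((Nat.factorial n : K))⁻¹ • (gseq g α x n).1) N]
      have hterm : ∀ n, ((Nat.factorial (n + 1) : K))⁻¹ • (gseq g α x (n + 1)).1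
          = ((Nat.factorial (n + 1) : K))⁻¹ •
              ((g.bracket α) ^ n) (g.bracket α x - g.d α) := by
        intro n
        rw [gseq_fst_pow]
        congr 2
        show g.bracket α x - (1 : K) • g.d α = g.bracket α x - g.d α
        rw [one_smul]
      simp only [hterm]
      simp [gseq, hy]
      abel
    have hsnd : (∑ n ∈ Finset.range (N + 1), ((Nat.factorial n : K))⁻¹ • gseq g α x n).2
        = 1 := by
      rw [Prod.snd_sum]
      simp only [Prod.smul_snd]
      rw [Finset.sum_range_succ'
        (fun n => ((Nat.factorial n : K))⁻¹ • (gseq g α x n).2) N]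
      simp [gseq_snd, gseq]
    exact Prod.ext hfst.symm hsnd.symm
  -- The Maurer-Cartan equation: BF (x,1) (x,1) = 0
  have hBF00 : BF g (gseq g α x 0) (gseq g α x 0) = 0 := by
    rw [BF_apply]
    show g.bracket x x + (1 : K) • g.d x + (1 : K) • g.d x = 0
    have h2 : (2 : K) • g.d x + g.bracket x x = 0 := by
      have := congrArg (fun v => (2 : K) • v) hMC
      simpa [smul_add, smul_smul, mul_inv_cancel₀ h2K] using this
    rw [two_smul] at h2
    simp only [one_smul]
    rw [← h2]
    abel
  have hzero : ∀ p : ℕ, ∑ k ∈ Finset.range (p + 1), ((p.choose k : ℕ) : K) •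
      BF g (gseq g α x k) (gseq g α x (p - k)) = 0 := by
    intro p
    rw [← iter_pow g hα hx p, hBF00, map_zero]
  have hfac : ∀ p : ℕ, ∑ k ∈ Finset.range (p + 1),
      (((Nat.factorial k : K))⁻¹ * ((Nat.factorial (p - k) : K))⁻¹) •
        BF g (gseq g α x k) (gseq g α x (p - k)) = 0 := by
    intro p
    have hterm : ∀ k ∈ Finset.range (p + 1),
        (((Nat.factorial k : K))⁻¹ * ((Nat.factorial (p - k) : K))⁻¹) •
          BF g (gseq g α x k) (gseq g α x (p - k))
        = ((Nat.factorial p : K))⁻¹ • (((p.choose k : ℕ) : K) •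
            BF g (gseq g α x k) (gseq g α x (p - k))) := by
      intro k hk
      have hk' : k ≤ p := by simpa [Nat.lt_succ_iff] using hk
      rw [smul_smul]
      congr 1
      rw [Nat.cast_choose K hk']
      have n1 : (Nat.factorial k : K) ≠ 0 := Nat.cast_ne_zero.mpr k.factorial_ne_zero
      have n2 : (Nat.factorial (p - k) : K) ≠ 0 := Nat.cast_ne_zero.mpr (p - k).factorial_ne_zero
      have n3 : (Nat.factorial p : K) ≠ 0 := Nat.cast_ne_zero.mpr p.factorial_ne_zero
      field_simp
    rw [Finset.sum_congr rfl hterm, ← Finset.smul_sum, hzero p, smul_zero]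
  -- expand BF (y,1) (y,1) as a double sum
  have hexp : BF g ((y, (1 : K)) : g.carrier × K) (y, (1 : K))
      = ∑ m ∈ Finset.range (N + 1), ∑ n ∈ Finset.range (N + 1),
          (((Nat.factorial m : K))⁻¹ * ((Nat.factorial n : K))⁻¹) •
            BF g (gseq g α x m) (gseq g α x n) := by
    rw [hy1]
    simp only [map_sum, map_smul, LinearMap.sum_apply, LinearMap.smul_apply,
      Finset.smul_sum, smul_smul]
    rw [Finset.sum_comm]
    refine Finset.sum_congr rfl fun m _ => Finset.sum_congr rfl fun n _ => ?_
    rw [mul_comm]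
  have hvanish : ∀ m n : ℕ, N + 1 ≤ m ∨ N + 1 ≤ n →
      (((Nat.factorial m : K))⁻¹ * ((Nat.factorial n : K))⁻¹) •
        BF g (gseq g α x m) (gseq g α x n) = 0 := by
    intro m n hmn
    rcases hmn with hm | hn
    · rw [gseq_eventually_zero g α x N hN m hm, map_zero, LinearMap.zero_apply, smul_zero]
    · rw [gseq_eventually_zero g α x N hN n hn, map_zero, smul_zero]
  have hsq : BF g ((y, (1 : K)) : g.carrier × K) (y, (1 : K)) = 0 := by
    rw [hexp, tri (N + 1) _ hvanish]
    exact Finset.sum_eq_zero fun p _ => hfac p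
  -- conclude
  rw [BF_apply] at hsq
  simp only [one_smul] at hsq
  -- hsq : g.bracket y y + g.d y + g.d y = 0
  rw [add_assoc] at hsq
  have hyy : g.bracket y y = -(g.d y + g.d y) := eq_neg_of_add_eq_zero_left hsq
  rw [hyy, smul_neg, ← two_smul K (g.d y), smul_smul, inv_mul_cancel₀ h2K, one_smul]
  exact add_neg_cancel _
end

section
/- Let g be a nilpotent dgla over a field K of characteristic zero (i.e., there is an N such that all iterated brackets of length at least N vanish), let x ∈ g^1 satisfy the Maurer–Cartan equation dx + ½[x,x] = 0, let h ∈ g^{−1}, and set α := dh + [x,h] ∈ g^0. Then α belongs to the irrelevant stabilizer of x, i.e., the gauge transform fixes x: e^α * x = x, where e^α * x := x + Σ_{n≥0} (ad_α)^n/((n+1)!) ([α,x] − dα). -/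
/-!
STATEMENT 0: If `i : g → h` is a Cartan homotopy between dglas, then the associated
degree-0 map `l : a ↦ d_h (i a) + i (d_g a)` is a morphism of dglas.
-/

universe u

variable {K : Type u} [Field K]

/-- `IsNested g x m` : `x` is a nested bracket of `m` elements of `g`. -/
inductive IsNested (g : DGLA K) : g.carrier → ℕ → Prop
  | single (x : g.carrier) : IsNested g x 1
  | bracket {x y : g.carrier} {m n : ℕ} :
      IsNested g x m → IsNested g y n → IsNested g (g.bracket x y) (m + n)

/-- in a nilpotent dgla (every nested bracket of `N` or more elements
vanishes), for a Maurer–Cartan element `x ∈ g^1` and `h ∈ g^{-1}`, the element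
`α = dh + [x,h] ∈ g^0` lies in the irrelevant stabilizer of `x`: the gauge transform
`e^α * x = x + Σ_{n≥0} (ad_α)^n/((n+1)!) ([α,x] − dα)` (a finite sum, here truncated at
`N`, all further terms vanishing by nilpotency) equals `x`. -/
theorem irrelevant_stabilizer_fixes_maurerCartan [CharZero K] (g : DGLA K)
    (N : ℕ) (hnil : ∀ (x : g.carrier) (m : ℕ), N ≤ m → IsNested g x m → x = 0)
    (x : g.carrier) (hx : x ∈ g.grade 1)
    (hMC : g.d x + (2 : K)⁻¹ • g.bracket x x = 0)
    (h : g.carrier) (hh : h ∈ g.grade (-1))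
    (α : g.carrier) (hα : α = g.d h + g.bracket x h) :
    x + ∑ n ∈ Finset.range N, ((Nat.factorial (n + 1) : K))⁻¹ •
        ((g.bracket α) ^ n) (g.bracket α x - g.d α) = x := by
  -- Key: `[α, x] - dα = 0`, so every summand vanishes.
  have key : g.bracket α x - g.d α = 0 := by
    have hdh : g.d h ∈ g.grade 0 := by simpa using g.d_mem (-1) h hh
    have hxh : g.bracket x h ∈ g.grade 0 := by
      simpa using g.bracket_mem 1 (-1) x h hx hh
    have hdx : g.d x = -((2 : K)⁻¹ • g.bracket x x) :=
      eq_neg_of_add_eq_zero_left hMC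
    -- Jacobi gives [x,[x,h]] = ½ [[x,x],h]
    have jac : g.bracket x (g.bracket x h)
        = (2 : K)⁻¹ • g.bracket (g.bracket x x) h := by
      have hJ := g.jacobi 1 1 (-1) x x h hx hx hh
      have h1 : ((-1 : K) ^ ((1 : ℤ) * 1)) = -1 := by norm_num
      rw [h1, neg_one_smul] at hJ
      have h2 : (2 : K) • g.bracket x (g.bracket x h)
          = g.bracket (g.bracket x x) h := by
        rw [two_smul]
        have := hJ
        abel_nf
        abel_nf at this
        linear_combination (norm := abel) this
      rw [eq_comm, inv_smul_eq_iff₀ (two_ne_zero), eq_comm]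
      exact h2
    -- antisymmetry: [dh, x] = -[x, dh]
    have hanti : g.bracket (g.d h) x = -g.bracket x (g.d h) := by
      have := g.antisymm 0 1 (g.d h) x hdh hx
      simpa using this
    -- antisymmetry: [[x,h], x] = -[x,[x,h]]
    have hanti2 : g.bracket (g.bracket x h) x = -g.bracket x (g.bracket x h) := by
      have := g.antisymm 0 1 (g.bracket x h) x hxh hx
      simpa using this
    -- Leibniz: d[x,h] = [dx,h] - [x,dh]
    have hleib : g.d (g.bracket x h)
        = g.bracket (g.d x) h - g.bracket x (g.d h) := by
      have := g.leibniz 1 (-1) x h hx hh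
      have h1 : ((-1 : K) ^ (1 : ℤ)) = -1 := by norm_num
      rw [h1, neg_one_smul] at this
      rw [this]; abel
    have hbr : g.bracket α x
        = g.bracket (g.d h) x + g.bracket (g.bracket x h) x := by
      rw [hα, map_add, LinearMap.add_apply]
    have hd : g.d α = g.bracket (g.d x) h - g.bracket x (g.d h) := by
      rw [hα, map_add, g.d_sq, zero_add, hleib]
    have hdxh : g.bracket (g.d x) h = -((2 : K)⁻¹ • g.bracket (g.bracket x x) h) := by
      rw [hdx, map_neg, map_smul, LinearMap.neg_apply, LinearMap.smul_apply]
    rw [hbr, hd, hanti, hanti2, jac, hdxh]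
    abel
  rw [key]
  simp
end
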